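/- Let Λ = kQ/I be a monomial path algebra and μ a nonzero path of length at least 1. If μ has no right completion, then the right Λ-module μΛ is projective; conversely, if μΛ is projective then μ has no right completion. -/

import Mathlib

open DirectSum

noncomputable section

/-! ### Homological invariants over a ring -/

section Homological

variable (R : Type) [Ring R]

/-- `K` is a direct summand of `L`. -/
def IsSummandOf (K L : ModuleCat.{0} R) : Prop :=
  ∃ (i : K →ₗ[R] L) (p : L →ₗ[R] K), p.comp i = LinearMap.id

/-- `K` is a direct summand of `L` up to projective summands (i.e. in the stable sense). -/
def IsStableSummandOf (K L : ModuleCat.{0} R) : Prop :=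
  ∃ P : ModuleCat.{0} R, Module.Projective R P ∧
    IsSummandOf R K (ModuleCat.of R (↥L × ↥P))

/-- `K` is the (minimal) first syzygy of `M`: the kernel of a projective cover `P ↠ M`. -/
def IsMinSyzygyOf (K M : ModuleCat.{0} R) : Prop :=
  ∃ (P : ModuleCat.{0} R) (f : P →ₗ[R] M) (g : K →ₗ[R] P),
    Module.Projective R P ∧ Function.Surjective f ∧ Function.Injective g ∧
    LinearMap.range g = LinearMap.ker f ∧
    (∀ X : Submodule R ↥P, LinearMap.ker f ⊔ X = ⊤ → X = ⊤)

/-- `K` is an `n`-th (minimal) syzygy of `M`. -/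
inductive IsNthSyzygyOf : ℕ → ModuleCat.{0} R → ModuleCat.{0} R → Prop
  | zero (K M : ModuleCat.{0} R) : Nonempty (K ≃ₗ[R] M) → IsNthSyzygyOf 0 K M
  | succ (n : ℕ) (K L M : ModuleCat.{0} R) :
      IsNthSyzygyOf n K L → IsMinSyzygyOf R L M → IsNthSyzygyOf (n + 1) K M

/-- Projective dimension, valued in `ℕ∞`. -/
def pdim (M : ModuleCat.{0} R) : ℕ∞ :=
  sInf ((fun n : ℕ => (n : ℕ∞)) ''
    {n : ℕ | ∃ K : ModuleCat.{0} R, IsNthSyzygyOf R n K M ∧ Module.Projective R K})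

/-- The `k`-delooping level of a module:
`inf { n | Ωⁿ M is a direct summand of Ωⁿ⁺ᵏ N for some N }`. -/
def kdell (k : ℕ) (M : ModuleCat.{0} R) : ℕ∞ :=
  sInf ((fun n : ℕ => (n : ℕ∞)) '' {n : ℕ | ∃ K L N : ModuleCat.{0} R,
    IsNthSyzygyOf R n K M ∧ IsNthSyzygyOf R (n + k) L N ∧ IsStableSummandOf R K L})

/-- The delooping level of a module. -/
def dellMod (M : ModuleCat.{0} R) : ℕ∞ := kdell R 1 M

/-- The delooping level of an algebra: the sup over simple modules. -/
def dellAlg : ℕ∞ :=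
  ⨆ S : {S : ModuleCat.{0} R // IsSimpleModule R S}, dellMod R S.1

/-- The derived delooping level of a module. -/
def ddellMod (M : ModuleCat.{0} R) : ℕ∞ :=
  sInf ((fun m : ℕ => (m : ℕ∞)) '' {m : ℕ | ∃ n, n ≤ m ∧ ∃ (C : ℕ → ModuleCat.{0} R)
    (d : ∀ i : ℕ, C (i + 1) →ₗ[R] C i) (f : C 0 →ₗ[R] M),
    (∀ i, i ≤ n → Module.Finite R (C i)) ∧
    (∀ i, n < i → Subsingleton (C i)) ∧
    Function.Surjective f ∧
    LinearMap.ker f = LinearMap.range (d 0) ∧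
    (∀ i, LinearMap.ker (d i) = LinearMap.range (d (i + 1))) ∧
    (∀ i, i ≤ n → kdell R (i + 1) (C i) ≤ ((m - i : ℕ) : ℕ∞))})

/-- The derived delooping level of an algebra. -/
def ddellAlg : ℕ∞ :=
  ⨆ S : {S : ModuleCat.{0} R // IsSimpleModule R S}, ddellMod R S.1

/-- The sub-derived delooping level of a module: `inf { dell N | M ↪ N }`. -/
def subddellMod (M : ModuleCat.{0} R) : ℕ∞ :=
  sInf {d : ℕ∞ | ∃ N : ModuleCat.{0} R,
    (∃ f : M →ₗ[R] N, Function.Injective f) ∧ d = dellMod R N}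

/-- The sub-derived delooping level of an algebra. -/
def subddellAlg : ℕ∞ :=
  ⨆ S : {S : ModuleCat.{0} R // IsSimpleModule R S}, subddellMod R S.1

/-- The big finitistic dimension. -/
def bigFindim : ℕ∞ :=
  ⨆ M : {M : ModuleCat.{0} R // pdim R M ≠ ⊤}, pdim R M.1

/-- The little finitistic dimension. -/
def littleFindim : ℕ∞ :=
  ⨆ M : {M : ModuleCat.{0} R // Module.Finite R M ∧ pdim R M ≠ ⊤}, pdim R M.1

/-- The global dimension. -/
def gdim : ℕ∞ := ⨆ M : ModuleCat.{0} R, pdim R M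

/-- A module is uniserial if its submodules are totally ordered by inclusion. -/
def IsUniserialMod (M : Type) [AddCommGroup M] [Module R M] : Prop :=
  ∀ N₁ N₂ : Submodule R M, N₁ ≤ N₂ ∨ N₂ ≤ N₁

/-- A module is indecomposable. -/
def IsIndecompMod (M : Type) [AddCommGroup M] [Module R M] : Prop :=
  Nontrivial M ∧ ∀ N₁ N₂ : Submodule R M, IsCompl N₁ N₂ → N₁ = ⊥ ∨ N₂ = ⊥

end Homological

/-! ### Quivers, paths, monomial algebras -/

/-- A quiver (directed multigraph). -/
structure Quiv : Type 1 where
  V : Type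
  E : Type
  s : E → V
  t : E → V

/-- A path in a quiver: a source vertex together with a composable list of arrows. -/
structure QPath (Q : Quiv) where
  src : Q.V
  es : List Q.E
  chain : es.Chain' fun e f => Q.t e = Q.s f
  hsrc : ∀ e ∈ es.head?, Q.s e = src

/-- The target of a path. -/
def QPath.tgt {Q : Quiv} (p : QPath Q) : Q.V := p.es.getLast?.elim p.src Q.t

/-- The trivial path at a vertex. -/
def QPath.triv (Q : Quiv) (v : Q.V) : QPath Q :=
  ⟨v, [], List.IsChain.nil, by intro e he; simp at he⟩

/-- `r` is the concatenation of `p` followed by `q`. -/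
def QConcat {Q : Quiv} (p q r : QPath Q) : Prop :=
  p.tgt = q.src ∧ r.src = p.src ∧ r.es = p.es ++ q.es

/-- `q` is a (not necessarily proper) subpath of `p`. -/
def QSubpath {Q : Quiv} (q p : QPath Q) : Prop :=
  ∃ u x w, QConcat u q x ∧ QConcat x w p

/-- The opposite quiver. -/
def Quiv.op (Q : Quiv) : Quiv := ⟨Q.V, Q.E, Q.t, Q.s⟩

/-- `q` is the reverse of `p` in the opposite quiver. -/
def QRev {Q : Quiv} (p : QPath Q) (q : QPath Q.op) : Prop :=
  q.src = p.tgt ∧ q.es = p.es.reverse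

/-- A quiver is acyclic if it has no nontrivial oriented cycle. -/
def QuivAcyclic (Q : Quiv) : Prop := ∀ p : QPath Q, p.es ≠ [] → p.src ≠ p.tgt

/-- The cyclic part of a quiver: vertices lying on an oriented cycle. -/
def CyclicPart (Q : Quiv) : Set Q.V :=
  {v | ∃ p : QPath Q, p.es ≠ [] ∧ p.src = v ∧ p.tgt = v}

/-- The set of vertices visited by a path. -/
def QPath.verts {Q : Quiv} (p : QPath Q) : Set Q.V :=
  insert p.src {v | ∃ e ∈ p.es, Q.s e = v ∨ Q.t e = v}

/-- The data exhibiting `Λ` as the monomial path algebra `kQ/I`, where the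
admissible ideal `I` is the span of the set `Z` of zero paths. -/
structure MonomialStructure (k : Type) [Field k] (Q : Quiv) (Λ : Type) [Ring Λ]
    [Algebra k Λ] where
  /-- the set of zero paths, i.e. the paths lying in the monomial ideal `I` -/
  Z : Set (QPath Q)
  z_len : ∀ p ∈ Z, 2 ≤ p.es.length
  z_saturated : ∀ p r : QPath Q, p ∈ Z → QSubpath p r → r ∈ Z
  admissible : ∃ N : ℕ, ∀ p : QPath Q, N ≤ p.es.length → p ∈ Z
  finV : Fintype Q.V
  finE : Finite Q.E
  /-- the nonzero paths form a `k`-basis of `Λ` -/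
  basis : Module.Basis {p : QPath Q // p ∉ Z} k Λ
  mul_concat_nz : ∀ (p q : {p : QPath Q // p ∉ Z}) (r : QPath Q), QConcat p.1 q.1 r →
    ∀ h : r ∉ Z, basis p * basis q = basis ⟨r, h⟩
  mul_concat_z : ∀ (p q : {p : QPath Q // p ∉ Z}) (r : QPath Q), QConcat p.1 q.1 r →
    r ∈ Z → basis p * basis q = 0
  mul_noncomp : ∀ p q : {p : QPath Q // p ∉ Z}, p.1.tgt ≠ q.1.src → basis p * basis q = 0
  triv_nz : ∀ v : Q.V, QPath.triv Q v ∉ Z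
  one_eq : 1 = ∑ v ∈ (@Finset.univ Q.V finV), basis ⟨QPath.triv Q v, triv_nz v⟩

/-- `β` is a right completion of `α` with respect to the set of zero paths `Z`. -/
def IsRightCompletion {Q : Quiv} (Z : Set (QPath Q)) (α β : QPath Q) : Prop :=
  β ∉ Z ∧ (∃ r, QConcat α β r ∧ r ∈ Z) ∧
  ∀ β₁ β₂ : QPath Q, QConcat β₁ β₂ β → β₂.es ≠ [] → ∃ r, QConcat α β₁ r ∧ r ∉ Z

/-- The set of zero paths of the opposite algebra: reverses of zero paths. -/
def ZOp {Q : Quiv} (Z : Set (QPath Q)) : Set (QPath Q.op) := {q | ∃ p ∈ Z, QRev p q}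

/-- A minimal relation: a zero path all of whose proper subpaths are nonzero. -/
def IsMinRel {Q : Quiv} (Z : Set (QPath Q)) (p : QPath Q) : Prop :=
  p ∈ Z ∧ ∀ q : QPath Q, QSubpath q p → q ∈ Z → q = p

/-- Left multiplication by `a`, as an endomorphism of `Λ` as a right `Λ`-module. -/
def leftMulMap (Λ : Type) [Ring Λ] (a : Λ) : Λ →ₗ[Λᵐᵒᵖ] Λ where
  toFun x := a * x
  map_add' x y := mul_add a x y
  map_smul' r x := by
    simp only [MulOpposite.smul_eq_mul_unop, RingHom.id_apply, mul_assoc]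

/-- The right ideal `pΛ` generated by a nonzero path `p`, as a right `Λ`-module. -/
def pathRightIdeal {k : Type} [Field k] {Q : Quiv} {Λ : Type} [Ring Λ] [Algebra k Λ]
    (MS : MonomialStructure k Q Λ) (p : {p : QPath Q // p ∉ MS.Z}) :
    ModuleCat.{0} Λᵐᵒᵖ :=
  ModuleCat.of Λᵐᵒᵖ ↥(Submodule.span Λᵐᵒᵖ {MS.basis p})

/-- The cyclic right `Λ`-module `Λ/pΛ`. -/
def quotByPath {k : Type} [Field k] {Q : Quiv} {Λ : Type} [Ring Λ] [Algebra k Λ]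
    (MS : MonomialStructure k Q Λ) (p : {p : QPath Q // p ∉ MS.Z}) :
    ModuleCat.{0} Λᵐᵒᵖ :=
  ModuleCat.of Λᵐᵒᵖ (Λ ⧸ (Submodule.span Λᵐᵒᵖ {MS.basis p}))

/-! ### Undirected walks and cycles in a quiver -/

/-- A step in the underlying undirected graph of a quiver: an arrow traversed
forwards or backwards. -/
inductive QStep (Q : Quiv) : Q.V → Q.V → Type
  | fwd (e : Q.E) : QStep Q (Q.s e) (Q.t e)
  | bwd (e : Q.E) : QStep Q (Q.t e) (Q.s e)

/-- The underlying arrow of a step. -/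
def QStep.edge {Q : Quiv} : ∀ {a b : Q.V}, QStep Q a b → Q.E
  | _, _, .fwd e => e
  | _, _, .bwd e => e

/-- Whether a step traverses its arrow forwards. -/
def QStep.IsFwd {Q : Quiv} : ∀ {a b : Q.V}, QStep Q a b → Prop
  | _, _, .fwd _ => True
  | _, _, .bwd _ => False

/-- A walk in the underlying undirected graph of a quiver. -/
inductive UWalk (Q : Quiv) : Q.V → Q.V → Type
  | nil (a : Q.V) : UWalk Q a a
  | cons {a b c : Q.V} : QStep Q a b → UWalk Q b c → UWalk Q a c

/-- The list of arrows used by a walk. -/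
def UWalk.edges {Q : Quiv} : ∀ {a b : Q.V}, UWalk Q a b → List Q.E
  | _, _, .nil _ => []
  | _, _, .cons st w => st.edge :: w.edges

/-- The list of vertices of a walk, excluding the final endpoint. -/
def UWalk.innerVerts {Q : Quiv} : ∀ {a b : Q.V}, UWalk Q a b → List Q.V
  | _, _, .nil _ => []
  | a, _, .cons _ w => a :: w.innerVerts

/-- All steps of the walk traverse their arrow forwards. -/
def UWalk.AllFwd {Q : Quiv} : ∀ {a b : Q.V}, UWalk Q a b → Prop
  | _, _, .nil _ => True
  | _, _, .cons st w => st.IsFwd ∧ w.AllFwd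

/-- All steps of the walk traverse their arrow backwards. -/
def UWalk.AllBwd {Q : Quiv} : ∀ {a b : Q.V}, UWalk Q a b → Prop
  | _, _, .nil _ => True
  | _, _, .cons st w => ¬ st.IsFwd ∧ w.AllBwd

/-- A closed walk is a cycle if it is nonempty, repeats no arrow, and repeats no
vertex other than the endpoint. -/
def UWalk.IsCycle {Q : Quiv} {a : Q.V} (w : UWalk Q a a) : Prop :=
  w.edges ≠ [] ∧ w.edges.Nodup ∧ w.innerVerts.Nodup

/-- A walk is oriented if all its arrows point in the same direction. -/
def UWalk.Oriented {Q : Quiv} {a b : Q.V} (w : UWalk Q a b) : Prop :=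
  w.AllFwd ∨ w.AllBwd

/-- A quiver is connected if any two vertices are joined by an undirected walk. -/
def QuivConnected (Q : Quiv) : Prop := ∀ a b : Q.V, Nonempty (UWalk Q a b)

end

/-!
Let `e` be the trivial path at the target of `μ`. Left multiplication by `μ` maps `eΛ` onto
`μΛ` and sends a basis path `p` to `μp`. If `μ` has no right completion, then `μp ≠ 0` for
every nonzero `p` starting at `t(μ)` (a shortest counterexample would be a right completion),
so this map is injective and `μΛ ≅ eΛ` is projective, `e` being idempotent. Conversely, if `μΛ`
is projective, the surjection `x ↦ μx : Λ → μΛ` splits, which yields `u` with `μu = μ` and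
`uβ = 0` whenever `μβ = 0`. For a right completion `β`, the coefficient of `e` in `u` is then
read off as `1` from `μu = μ` and as `0` from `uβ = 0`.
-/

namespace QPath

variable {Q : Quiv}

theorem ext {p q : QPath Q} (hsrc : p.src = q.src) (hes : p.es = q.es) : p = q := by
  cases p; cases q
  cases hsrc; cases hes
  rfl

theorem tgt_eq_src_of_es_eq_nil {p : QPath Q} (h : p.es = []) : p.tgt = p.src := by
  simp [QPath.tgt, h]

def comp (p q : QPath Q) (h : p.tgt = q.src) : QPath Q where
  src := p.src
  es := p.es ++ q.es
  chain := by
    refine p.chain.append q.chain fun x hx y hy => ?_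
    rw [q.hsrc y hy, ← h]
    simp [QPath.tgt, Option.mem_def.mp hx]
  hsrc := by
    intro e he
    rcases hp : p.es with _ | ⟨a, t⟩
    · rw [hp, List.nil_append] at he
      rw [q.hsrc e he, ← h, tgt_eq_src_of_es_eq_nil hp]
    · rw [hp, List.cons_append, List.head?_cons, Option.mem_def, Option.some.injEq] at he
      subst he
      exact p.hsrc _ (by simp [hp])

theorem qConcat_comp (p q : QPath Q) (h : p.tgt = q.src) : QConcat p q (p.comp q h) :=
  ⟨h, rfl, rfl⟩

end QPath

namespace QConcat

variable {Q : Quiv}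

theorem triv_left (p : QPath Q) : QConcat (QPath.triv Q p.src) p p :=
  ⟨rfl, rfl, rfl⟩

theorem triv_right (p : QPath Q) : QConcat p (QPath.triv Q p.tgt) p :=
  ⟨rfl, rfl, (List.append_nil _).symm⟩

theorem right_unique {p q q' r : QPath Q} (h : QConcat p q r) (h' : QConcat p q' r) :
    q = q' :=
  QPath.ext (h.1.symm.trans h'.1) (List.append_cancel_left (h.2.2.symm.trans h'.2.2))

theorem left_unique {p p' q r : QPath Q} (h : QConcat p q r) (h' : QConcat p' q r) :
    p = p' :=
  QPath.ext (h.2.1.symm.trans h'.2.1) (List.append_cancel_right (h.2.2.symm.trans h'.2.2))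

end QConcat

theorem QConcat.not_mem_of_forall_not_isRightCompletion {Q : Quiv} {Z : Set (QPath Q)}
    (hsat : ∀ p r : QPath Q, p ∈ Z → QSubpath p r → r ∈ Z) {μ : QPath Q}
    (hμ : ∀ β, ¬ IsRightCompletion Z μ β) {p r : QPath Q} (hp : p ∉ Z)
    (hr : QConcat μ p r) : r ∉ Z := by
  induction hn : p.es.length using Nat.strong_induction_on generalizing p r with
  | _ n ih =>
  intro hrZ
  -- otherwise `p` is a right completion: by induction `μp₁ ∉ Z` for each proper prefix `p₁`
  refine hμ p ⟨hp, ⟨r, hr, hrZ⟩, fun p₁ p₂ hc hne => ?_⟩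
  have hsrc : μ.tgt = p₁.src := hr.1.trans hc.2.1
  refine ⟨μ.comp p₁ hsrc, QPath.qConcat_comp _ _ _, fun hz => ?_⟩
  have hp₁ : p₁ ∉ Z := fun h => hp (hsat p₁ p h ⟨_, p₁, p₂, QConcat.triv_left p₁, hc⟩)
  have hlen : p₁.es.length < n := by
    have := congrArg List.length hc.2.2
    rw [List.length_append] at this
    have := List.length_pos_of_ne_nil hne
    omega
  exact ih _ hlen hp₁ (QPath.qConcat_comp _ _ _) rfl hz

namespace MonomialStructure

variable {k : Type} [Field k] {Q : Quiv} {Λ : Type} [Ring Λ] [Algebra k Λ]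
  (MS : MonomialStructure k Q Λ)

abbrev vertex (v : Q.V) : {p : QPath Q // p ∉ MS.Z} := ⟨QPath.triv Q v, MS.triv_nz v⟩

theorem isIdempotentElem_basis_vertex (v : Q.V) :
    IsIdempotentElem (MS.basis (MS.vertex v)) :=
  MS.mul_concat_nz _ _ _ ⟨rfl, rfl, rfl⟩ (MS.triv_nz v)

theorem basis_mul_basis_eq_zero_or (p q : {p : QPath Q // p ∉ MS.Z}) :
    MS.basis p * MS.basis q = 0 ∨
      ∃ r : {p : QPath Q // p ∉ MS.Z}, QConcat p.1 q.1 r.1 ∧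
        MS.basis p * MS.basis q = MS.basis r := by
  by_cases h : p.1.tgt = q.1.src
  · by_cases hz : p.1.comp q.1 h ∈ MS.Z
    · exact .inl (MS.mul_concat_z p q _ (QPath.qConcat_comp _ _ h) hz)
    · exact .inr ⟨⟨_, hz⟩, QPath.qConcat_comp _ _ h,
        MS.mul_concat_nz p q _ (QPath.qConcat_comp _ _ h) hz⟩
  · exact .inl (MS.mul_noncomp p q h)

theorem repr_basis_mul_of_src_ne {a q : {p : QPath Q // p ∉ MS.Z}}
    (h : q.1.src ≠ a.1.src) (x : Λ) : MS.basis.repr (MS.basis a * x) q = 0 := by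
  suffices (MS.basis.coord q).comp (LinearMap.mulLeft k (MS.basis a)) = 0 from
    LinearMap.congr_fun this x
  refine MS.basis.ext fun p => ?_
  rcases MS.basis_mul_basis_eq_zero_or a p with h0 | ⟨r, hr, hmul⟩
  · simp [h0]
  · have hrq : r ≠ q := fun hrq => h (hrq ▸ hr.2.1)
    simp [hmul, hrq]

theorem repr_basis_mul_of_qConcat {a p r : {p : QPath Q // p ∉ MS.Z}}
    (hr : QConcat a.1 p.1 r.1) (x : Λ) :
    MS.basis.repr (MS.basis a * x) r = MS.basis.repr x p := by
  suffices (MS.basis.coord r).comp (LinearMap.mulLeft k (MS.basis a)) = MS.basis.coord p from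
    LinearMap.congr_fun this x
  refine MS.basis.ext fun q => ?_
  by_cases hqp : q = p
  · subst hqp
    simp [MS.mul_concat_nz a q r.1 hr r.2]
  rcases MS.basis_mul_basis_eq_zero_or a q with h0 | ⟨s, hs, hmul⟩
  · simp [h0, Ne.symm hqp]
  · have hsr : s ≠ r := fun hsr => hqp (Subtype.ext (hs.right_unique (hsr ▸ hr)))
    simp [hmul, hsr, Ne.symm hqp]

theorem repr_mul_basis_of_qConcat {b p r : {p : QPath Q // p ∉ MS.Z}}
    (hr : QConcat p.1 b.1 r.1) (x : Λ) :
    MS.basis.repr (x * MS.basis b) r = MS.basis.repr x p := by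
  suffices (MS.basis.coord r).comp (LinearMap.mulRight k (MS.basis b)) = MS.basis.coord p from
    LinearMap.congr_fun this x
  refine MS.basis.ext fun q => ?_
  by_cases hqp : q = p
  · subst hqp
    simp [MS.mul_concat_nz q b r.1 hr r.2]
  rcases MS.basis_mul_basis_eq_zero_or q b with h0 | ⟨s, hs, hmul⟩
  · simp [h0, Ne.symm hqp]
  · have hsr : s ≠ r := fun hsr => hqp (Subtype.ext (hs.left_unique (hsr ▸ hr)))
    simp [hmul, hsr, Ne.symm hqp]

theorem eq_zero_of_basis_mul_eq_zero {a : {p : QPath Q // p ∉ MS.Z}}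
    (ha : ∀ p : QPath Q, p ∉ MS.Z → ∀ r, QConcat a.1 p r → r ∉ MS.Z) {y : Λ}
    (hy : MS.basis (MS.vertex a.1.tgt) * y = y) (h : MS.basis a * y = 0) : y = 0 := by
  refine MS.basis.ext_elem_iff.mpr fun p => ?_
  rw [map_zero, Finsupp.zero_apply]
  by_cases hp : a.1.tgt = p.1.src
  · have hr := QPath.qConcat_comp a.1 p.1 hp
    rw [← MS.repr_basis_mul_of_qConcat (r := ⟨_, ha p.1 p.2 _ hr⟩) hr, h, map_zero,
      Finsupp.zero_apply]
  · rw [← hy, MS.repr_basis_mul_of_src_ne (Ne.symm hp)]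

end MonomialStructure

section RightIdeal

variable {R : Type} [Ring R]

theorem mul_mem_span_singleton_op (a x : R) : a * x ∈ Submodule.span Rᵐᵒᵖ ({a} : Set R) :=
  Submodule.mem_span_singleton.mpr ⟨MulOpposite.op x, rfl⟩

theorem projective_span_singleton_of_isIdempotentElem {e : R} (he : IsIdempotentElem e) :
    Module.Projective Rᵐᵒᵖ (Submodule.span Rᵐᵒᵖ ({e} : Set R)) := by
  have : Module.Projective Rᵐᵒᵖ R :=
    .of_equiv (MulOpposite.opLinearEquiv Rᵐᵒᵖ : R ≃ₗ[Rᵐᵒᵖ] Rᵐᵒᵖ).symm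
  refine .of_split (Submodule.span Rᵐᵒᵖ {e}).subtype
    ((leftMulMap R e).codRestrict _ (mul_mem_span_singleton_op e)) (LinearMap.ext fun y => ?_)
  obtain ⟨c, hc⟩ := Submodule.mem_span_singleton.mp y.2
  apply Subtype.ext
  change e * y.1 = y.1
  rw [← hc, MulOpposite.smul_eq_mul_unop, ← mul_assoc, he.eq]

/-- Left multiplication by `a` maps `eR` isomorphically onto `aR`. -/
theorem projective_span_singleton_of_mul_idempotent {a e : R} (he : IsIdempotentElem e)
    (hae : a * e = a) (hinj : ∀ y, e * y = y → a * y = 0 → y = 0) :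
    Module.Projective Rᵐᵒᵖ (Submodule.span Rᵐᵒᵖ ({a} : Set R)) := by
  have := projective_span_singleton_of_isIdempotentElem he
  let f := (leftMulMap R a).restrict (p := Submodule.span Rᵐᵒᵖ {e})
    fun x _ => mul_mem_span_singleton_op a x
  have hfix : ∀ y ∈ Submodule.span Rᵐᵒᵖ ({e} : Set R), e * y = y := by
    intro y hy
    obtain ⟨c, rfl⟩ := Submodule.mem_span_singleton.mp hy
    rw [MulOpposite.smul_eq_mul_unop, ← mul_assoc, he.eq]
  refine .of_equiv (LinearEquiv.ofBijective f ⟨fun x y hxy => ?_, fun z => ?_⟩)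
  · have hxy : a * x.1 = a * y.1 := congrArg Subtype.val hxy
    refine Subtype.ext (sub_eq_zero.mp (hinj _ ?_ ?_))
    · rw [mul_sub, hfix _ x.2, hfix _ y.2]
    · rw [mul_sub, hxy, sub_self]
  · obtain ⟨c, hc⟩ := Submodule.mem_span_singleton.mp z.2
    refine ⟨⟨c • e, Submodule.smul_mem _ c (Submodule.mem_span_singleton_self e)⟩, ?_⟩
    apply Subtype.ext
    change a * (c • e) = z.1
    rw [← hc, MulOpposite.smul_eq_mul_unop, MulOpposite.smul_eq_mul_unop, ← mul_assoc, hae]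

/-- `u` is the image of `a` under a splitting of `x ↦ a * x : R → aR`. -/
theorem exists_mul_eq_self_of_projective_span_singleton {a : R}
    [Module.Projective Rᵐᵒᵖ (Submodule.span Rᵐᵒᵖ ({a} : Set R))] :
    ∃ u : R, a * u = a ∧ ∀ x, a * x = 0 → u * x = 0 := by
  let π := (leftMulMap R a).codRestrict _ (mul_mem_span_singleton_op a)
  have hπ : Function.Surjective π := fun z => by
    obtain ⟨c, hc⟩ := Submodule.mem_span_singleton.mp z.2
    exact ⟨c.unop, Subtype.ext hc⟩
  obtain ⟨g, hg⟩ := Module.projective_lifting_property π LinearMap.id hπ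
  let m : Submodule.span Rᵐᵒᵖ ({a} : Set R) := ⟨a, Submodule.mem_span_singleton_self a⟩
  refine ⟨g m, congrArg Subtype.val (LinearMap.congr_fun hg m), fun x hx => ?_⟩
  have hm : MulOpposite.op x • m = 0 := Subtype.ext hx
  rw [← op_smul_eq_mul, ← map_smul, hm, map_zero]

end RightIdeal

theorem stmt_4_general (k : Type) [Field k] (Q : Quiv) (Λ : Type) [Ring Λ] [Algebra k Λ]
    (MS : MonomialStructure k Q Λ) (μ : QPath Q) (hμz : μ ∉ MS.Z) :
    (¬ ∃ β : QPath Q, IsRightCompletion MS.Z μ β) ↔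
      Module.Projective Λᵐᵒᵖ
        ↥(Submodule.span Λᵐᵒᵖ ({MS.basis ⟨μ, hμz⟩} : Set Λ)) := by
  have hμe : MS.basis ⟨μ, hμz⟩ * MS.basis (MS.vertex μ.tgt) = MS.basis ⟨μ, hμz⟩ :=
    MS.mul_concat_nz _ _ μ (QConcat.triv_right μ) hμz
  constructor
  · intro hμ
    refine projective_span_singleton_of_mul_idempotent (MS.isIdempotentElem_basis_vertex _) hμe
      fun y hy h => MS.eq_zero_of_basis_mul_eq_zero ?_ hy h
    exact fun p hp r hr =>
      hr.not_mem_of_forall_not_isRightCompletion MS.z_saturated (not_exists.mp hμ) hp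
  · rintro hproj ⟨β, hβ, ⟨r, hr, hrZ⟩, -⟩
    obtain ⟨u, hu, hker⟩ := exists_mul_eq_self_of_projective_span_singleton (R := Λ)
      (a := MS.basis ⟨μ, hμz⟩)
    have huβ := hker _ (MS.mul_concat_z ⟨μ, hμz⟩ ⟨β, hβ⟩ r hr hrZ)
    have h1 := MS.repr_basis_mul_of_qConcat (a := ⟨μ, hμz⟩) (p := MS.vertex μ.tgt)
      (r := ⟨μ, hμz⟩) (QConcat.triv_right μ) u
    have h0 := MS.repr_mul_basis_of_qConcat (b := ⟨β, hβ⟩) (p := MS.vertex μ.tgt)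
      (r := ⟨β, hβ⟩) (hr.1 ▸ QConcat.triv_left β) u
    rw [hu, MS.basis.repr_self, Finsupp.single_eq_same] at h1
    rw [huβ, map_zero, Finsupp.zero_apply, ← h1] at h0
    exact one_ne_zero h0.symm

/-- Over a monomial algebra, a nonzero path `μ` of length at least 1
has no right completion if and only if the right module `μΛ` is projective. -/
theorem stmt_4 (k : Type) [Field k] (Q : Quiv) (Λ : Type) [Ring Λ] [Algebra k Λ]
    (MS : MonomialStructure k Q Λ) (μ : QPath Q) (hμz : μ ∉ MS.Z)
    (hμl : 1 ≤ μ.es.length) :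
    (¬ ∃ β : QPath Q, IsRightCompletion MS.Z μ β) ↔
      Module.Projective Λᵐᵒᵖ
        ↥(Submodule.span Λᵐᵒᵖ ({MS.basis ⟨μ, hμz⟩} : Set Λ)) :=
  stmt_4_general k Q Λ MS μ hμz
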